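/- arXiv:1904.09449 — 3 statements merged into one kernel-verified Lean document; each statement's English description precedes it below -/
import Mathlib

section
/- Assume μ > 0 and 3λ + 2μ > 0, and let ξ' = (ξ₁, ξ₂) ∈ ℝ² be nonzero. Then the matrix-valued integral (1/2π) ∫_{−∞}^{∞} ℓ((ξ₁, ξ₂, t))⁻¹ dt equals −(1/(2μ|ξ'|)) ( E − ((λ+μ)/(2(λ+2μ))) ( Λ̃(ξ') + E₃₃ ) ), where Λ̃(ξ') is the 3×3 matrix whose (j,k) entry is ξ_j ξ_k / |ξ'|² for j, k ∈ {1, 2} and zero otherwise, and E₃₃ is the 3×3 matrix with a single entry 1 in position (3,3) and zeros elsewhere. This is the principal symbol of the single layer potential operator at a boundary point where the boundary coincides with the plane ξ₃ = 0. -/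
open Matrix MeasureTheory

/-- The matrix `Λ(ξ)` with entries `Λ(ξ)_{jk} = ξ_j ξ_k / |ξ|²`. -/
noncomputable def LamMat (ξ : Fin 3 → ℝ) : Matrix (Fin 3) (Fin 3) ℝ :=
  fun j k => ξ j * ξ k / (∑ i, ξ i ^ 2)

/-- The principal symbol `ℓ(ξ) = -|ξ|² (μ E + (λ+μ) Λ(ξ))` of the Lamé operator. -/
noncomputable def ell (μ lam : ℝ) (ξ : Fin 3 → ℝ) : Matrix (Fin 3) (Fin 3) ℝ :=
  -((∑ i, ξ i ^ 2) • (μ • (1 : Matrix (Fin 3) (Fin 3) ℝ) + (lam + μ) • LamMat ξ))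

/-- The matrix `Λ̃(ξ')` whose `(j,k)` entry is `ξ_j ξ_k / |ξ'|²` for `j,k ∈ {1,2}` and
zero otherwise. -/
noncomputable def LamTilde (ξ₁ ξ₂ : ℝ) : Matrix (Fin 3) (Fin 3) ℝ :=
  fun j k => (![ξ₁, ξ₂, 0] j * ![ξ₁, ξ₂, 0] k) / (ξ₁ ^ 2 + ξ₂ ^ 2)

/-- The matrix with a single entry `1` at position `(3,3)` and zeros elsewhere. -/
def E33 : Matrix (Fin 3) (Fin 3) ℝ :=
  fun j k => if j = 2 ∧ k = 2 then 1 else 0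

/-!
Since `Λ(ξ)` is idempotent, `ℓ(ξ)⁻¹ = -(μ|ξ|²)⁻¹ (E - c Λ(ξ))` with `c = (λ+μ)/(λ+2μ)`.
Along the line `ξ = (ξ', t)`, with `r = |ξ'|`, every entry of `ℓ(ξ)⁻¹` is therefore
`-μ⁻¹ (α + β t + γ t²) / (r² + t²)²`, which has the elementary primitive
`(α + γ r²)/(2r³) · arctan (t/r) + (linear in t)/(r² + t²)`; hence its integral over `ℝ` is
`π (α + γ r²) / (2r³)`, and the odd part `β t` contributes nothing.
-/

open Filter Topology Real

lemma integrable_inv_sq_add_sq {r : ℝ} (hr : 0 < r) :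
    Integrable fun t : ℝ => (r ^ 2 + t ^ 2)⁻¹ := by
  refine ((integrable_inv_one_add_sq.comp_div hr.ne').const_mul (r ^ 2)⁻¹).congr
    (ae_of_all _ fun t => ?_)
  field_simp

lemma abs_quadratic_le {r : ℝ} (hr : 0 < r) (a b c t : ℝ) :
    |a + b * t + c * t ^ 2| ≤ (|a| / r ^ 2 + |b| / r + |c|) * (r ^ 2 + t ^ 2) := by
  have hrt : r * |t| ≤ r ^ 2 + t ^ 2 := by nlinarith [sq_abs t, sq_nonneg (r - |t|)]
  calc |a + b * t + c * t ^ 2| ≤ |a| + |b * t| + |c * t ^ 2| := abs_add_three _ _ _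
    _ = |a| / r ^ 2 * r ^ 2 + |b| / r * (r * |t|) + |c| * t ^ 2 := by
        rw [abs_mul, abs_mul, abs_of_nonneg (sq_nonneg t)]
        field_simp
    _ ≤ |a| / r ^ 2 * (r ^ 2 + t ^ 2) + |b| / r * (r ^ 2 + t ^ 2) + |c| * (r ^ 2 + t ^ 2) := by
        gcongr <;> nlinarith
    _ = _ := by ring

lemma integrable_quadratic_div_sq_add_sq_sq {r : ℝ} (hr : 0 < r) (a b c : ℝ) :
    Integrable fun t : ℝ => (a + b * t + c * t ^ 2) / (r ^ 2 + t ^ 2) ^ 2 := by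
  refine ((integrable_inv_sq_add_sq hr).const_mul (|a| / r ^ 2 + |b| / r + |c|)).mono'
    ((Continuous.div (by fun_prop) (by fun_prop) fun t => by positivity).aestronglyMeasurable)
    (ae_of_all _ fun t => ?_)
  have hpos : 0 < r ^ 2 + t ^ 2 := by positivity
  rw [norm_div, norm_pow, Real.norm_eq_abs, Real.norm_eq_abs, abs_of_pos hpos,
    div_le_iff₀ (by positivity)]
  calc _ ≤ _ := abs_quadratic_le hr a b c t
    _ = _ := by field_simp

lemma tendsto_linear_div_sq_add_sq_cobounded (r p q : ℝ) :
    Tendsto (fun t : ℝ => (p * t + q) / (r ^ 2 + t ^ 2)) (Bornology.cobounded ℝ) (𝓝 0) := by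
  -- substitute `s = t⁻¹`, which tends to `0`
  have hg : Continuous fun s : ℝ => (p * s + q * s ^ 2) / (r ^ 2 * s ^ 2 + 1) := by
    fun_prop (disch := intro s; positivity)
  have h := (hg.tendsto 0).comp tendsto_inv₀_cobounded
  simp only [Function.comp_def, mul_zero, ne_eq, OfNat.ofNat_ne_zero, not_false_eq_true,
    zero_pow, add_zero, zero_div] at h
  refine h.congr' ?_
  filter_upwards [tendsto_inv₀_cobounded' (α := ℝ) self_mem_nhdsWithin] with t ht
  have : t ≠ 0 := by simpa using ht
  field_simp

lemma hasDerivAt_primitive_quadratic_div_sq_add_sq_sq {r : ℝ} (hr : 0 < r) (a b c t : ℝ) :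
    HasDerivAt (fun t => (a + c * r ^ 2) / (2 * r ^ 3) * arctan (t / r)
        + ((a - c * r ^ 2) / (2 * r ^ 2) * t - b / 2) / (r ^ 2 + t ^ 2))
      ((a + b * t + c * t ^ 2) / (r ^ 2 + t ^ 2) ^ 2) t := by
  have hpos : 0 < r ^ 2 + t ^ 2 := by positivity
  have harctan :=
    (((hasDerivAt_id t).div_const r).arctan).const_mul ((a + c * r ^ 2) / (2 * r ^ 3))
  have hrational :=
    (((hasDerivAt_id t).const_mul ((a - c * r ^ 2) / (2 * r ^ 2))).sub_const (b / 2)).div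
      (((hasDerivAt_id t).pow 2).const_add (r ^ 2)) hpos.ne'
  refine (harctan.add hrational).congr_deriv ?_
  simp only [id, Pi.pow_apply]
  field_simp
  ring

theorem integral_quadratic_div_sq_add_sq_sq {r : ℝ} (hr : 0 < r) (a b c : ℝ) :
    ∫ t : ℝ, (a + b * t + c * t ^ 2) / (r ^ 2 + t ^ 2) ^ 2
      = π * (a + c * r ^ 2) / (2 * r ^ 3) := by
  have hrational :=
    tendsto_linear_div_sq_add_sq_cobounded r ((a - c * r ^ 2) / (2 * r ^ 2)) (-(b / 2))
  have harctan_top : Tendsto (fun t => arctan (t / r)) atTop (𝓝 (π / 2)) :=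
    (tendsto_nhds_of_tendsto_nhdsWithin tendsto_arctan_atTop).comp
      (tendsto_id.atTop_div_const hr)
  have harctan_bot : Tendsto (fun t => arctan (t / r)) atBot (𝓝 (-(π / 2))) :=
    (tendsto_nhds_of_tendsto_nhdsWithin tendsto_arctan_atBot).comp
      (tendsto_id.atBot_div_const hr)
  rw [integral_of_hasDerivAt_of_tendsto (hasDerivAt_primitive_quadratic_div_sq_add_sq_sq hr a b c)
    (integrable_quadratic_div_sq_add_sq_sq hr a b c)
    ((harctan_bot.const_mul _).add (hrational.mono_left IsOrderBornology.atBot_le_cobounded))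
    ((harctan_top.const_mul _).add (hrational.mono_left IsOrderBornology.atTop_le_cobounded))]
  field_simp
  ring

lemma LamMat_mul_self (ξ : Fin 3 → ℝ) (hξ : ∑ i, ξ i ^ 2 ≠ 0) :
    LamMat ξ * LamMat ξ = LamMat ξ := by
  rw [Fin.sum_univ_three] at hξ
  ext j k
  simp only [Matrix.mul_apply, LamMat, Fin.sum_univ_three]
  field_simp

lemma ell_inv_eq {μ lam : ℝ} (hμ : μ ≠ 0) (hlam : lam + 2 * μ ≠ 0) (ξ : Fin 3 → ℝ)
    (hξ : ∑ i, ξ i ^ 2 ≠ 0) :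
    (ell μ lam ξ)⁻¹ = -(1 / (μ * ∑ i, ξ i ^ 2)) •
      (1 - ((lam + μ) / (lam + 2 * μ)) • LamMat ξ) := by
  refine Matrix.inv_eq_right_inv ?_
  simp only [ell, Matrix.neg_mul, Matrix.mul_smul, Matrix.smul_mul, add_mul, mul_sub,
    Matrix.mul_one, Matrix.one_mul, LamMat_mul_self ξ hξ]
  match_scalars
  · field_simp
  · linear_combination (-(1 / (μ * ∑ i, ξ i ^ 2)) * ∑ i, ξ i ^ 2) * div_mul_cancel₀ (lam + μ) hlam

lemma E33_apply (j k : Fin 3) : E33 j k = ![0, 0, 1] j * ![0, 0, 1] k := by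
  fin_cases j <;> fin_cases k <;> simp [E33]

lemma vecCons_three_apply (ξ₁ ξ₂ t : ℝ) (j : Fin 3) :
    ![ξ₁, ξ₂, t] j = ![ξ₁, ξ₂, 0] j + t * ![0, 0, 1] j := by
  fin_cases j <;> simp

lemma ell_inv_vecCons_apply {μ lam : ℝ} (hμ : μ ≠ 0) (hlam : lam + 2 * μ ≠ 0) {ξ₁ ξ₂ t : ℝ}
    (hξ : ξ₁ ^ 2 + ξ₂ ^ 2 + t ^ 2 ≠ 0) (j k : Fin 3) :
    (ell μ lam ![ξ₁, ξ₂, t])⁻¹ j k = -(1 / μ) *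
      (((1 : Matrix (Fin 3) (Fin 3) ℝ) j k * (ξ₁ ^ 2 + ξ₂ ^ 2)
          - (lam + μ) / (lam + 2 * μ) * (![ξ₁, ξ₂, 0] j * ![ξ₁, ξ₂, 0] k)
        + -((lam + μ) / (lam + 2 * μ)
            * (![ξ₁, ξ₂, 0] j * ![0, 0, 1] k + ![0, 0, 1] j * ![ξ₁, ξ₂, 0] k)) * t
        + ((1 : Matrix (Fin 3) (Fin 3) ℝ) j k
            - (lam + μ) / (lam + 2 * μ) * (![0, 0, 1] j * ![0, 0, 1] k)) * t ^ 2)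
        / (ξ₁ ^ 2 + ξ₂ ^ 2 + t ^ 2) ^ 2) := by
  have hsum : ∑ i, (![ξ₁, ξ₂, t] : Fin 3 → ℝ) i ^ 2 = ξ₁ ^ 2 + ξ₂ ^ 2 + t ^ 2 := by
    simp [Fin.sum_univ_three]
  rw [ell_inv_eq hμ hlam _ (hsum ▸ hξ)]
  simp only [Matrix.smul_apply, Matrix.sub_apply, LamMat, smul_eq_mul, hsum]
  rw [vecCons_three_apply ξ₁ ξ₂ t j, vecCons_three_apply ξ₁ ξ₂ t k]
  field_simp
  ring

/-- The principal symbol of the single layer potential operator: entrywise,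
`(1/2π) ∫ ℓ((ξ₁,ξ₂,t))⁻¹ dt = -(1/(2μ|ξ'|)) (E - ((λ+μ)/(2(λ+2μ))) (Λ̃(ξ') + E₃₃))`. -/
theorem stmt7 (μ lam : ℝ) (hμ : 0 < μ) (hconv : 0 < 3 * lam + 2 * μ)
    (ξ₁ ξ₂ : ℝ) (hξ : ξ₁ ≠ 0 ∨ ξ₂ ≠ 0) (j k : Fin 3) :
    (1 / (2 * Real.pi)) * (∫ t : ℝ, ((ell μ lam ![ξ₁, ξ₂, t])⁻¹) j k) =
      (-((1 / (2 * μ * Real.sqrt (ξ₁ ^ 2 + ξ₂ ^ 2))) •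
          ((1 : Matrix (Fin 3) (Fin 3) ℝ)
            - ((lam + μ) / (2 * (lam + 2 * μ))) • (LamTilde ξ₁ ξ₂ + E33)))) j k := by
  have hlam : lam + 2 * μ ≠ 0 := by linarith
  have hs : 0 < ξ₁ ^ 2 + ξ₂ ^ 2 := by rcases hξ with h | h <;> positivity
  obtain ⟨r, hr, hrs⟩ : ∃ r, 0 < r ∧ ξ₁ ^ 2 + ξ₂ ^ 2 = r ^ 2 :=
    ⟨_, Real.sqrt_pos.2 hs, (Real.sq_sqrt hs.le).symm⟩
  rw [integral_congr_ae (ae_of_all _ fun t =>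
      ell_inv_vecCons_apply hμ.ne' hlam (add_pos_of_pos_of_nonneg hs (sq_nonneg t)).ne' j k),
    integral_const_mul, hrs, integral_quadratic_div_sq_add_sq_sq hr]
  simp only [Matrix.neg_apply, Matrix.smul_apply, Matrix.sub_apply, Matrix.add_apply, LamTilde,
    E33_apply, hrs, Real.sqrt_sq hr.le, smul_eq_mul]
  field_simp
  ring
end

section
/- Let μ > 0, λ + 2μ > 0, k₀ = μ/(2(λ+2μ)), and for nonzero ξ' = (ξ₁,ξ₂) ∈ ℝ² let σ_B(ξ') = (i k₀/|ξ'|) · [[0,0,−ξ₁],[0,0,−ξ₂],[ξ₁,ξ₂,0]] ∈ M₃(ℂ). Then σ_B(ξ') is Hermitian (equal to its conjugate transpose), and it satisfies the polynomial identity σ_B(ξ') (σ_B(ξ')² − k₀² E) = 0, i.e. σ_B(ξ')³ = k₀² σ_B(ξ'). This is the algebraic identity of the principal symbol underlying the polynomial compactness 𝕂(𝕂² − k₀²) ∈ 𝔖_∞ of the 3D elastic Neumann–Poincaré operator. -/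
/-!
Up to the scalar `c = i k₀/|ξ'|`, the symbol is `K = e₃ ξ'ᵀ - ξ' e₃ᵀ` with `ξ' = (ξ₁, ξ₂, 0)`,
a real skew-symmetric matrix satisfying `K³ = -|ξ'|² K`. Since `c` is purely imaginary, `c • K` is
Hermitian, and since `c² |ξ'|² = -k₀²`, `(c • K)³ = k₀² (c • K)`.
-/

open Matrix

/-- The principal symbol `σ_B(ξ') = (i k₀/|ξ'|) [[0,0,-ξ₁],[0,0,-ξ₂],[ξ₁,ξ₂,0]]` of the
3D elastic Neumann–Poincaré operator. -/
noncomputable def sigmaB (k₀ ξ₁ ξ₂ : ℝ) : Matrix (Fin 3) (Fin 3) ℂ :=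
  ((Complex.I * (k₀ : ℂ)) / (Real.sqrt (ξ₁ ^ 2 + ξ₂ ^ 2) : ℂ)) •
    !![0, 0, -(ξ₁ : ℂ); 0, 0, -(ξ₂ : ℂ); (ξ₁ : ℂ), (ξ₂ : ℂ), 0]

theorem smul_mul_smul_mul_sub_eq_zero {R A : Type*} [CommRing R] [Ring A] [Algebra R A]
    {N : A} {r c k : R} (hN : N * (N * N) = -(r • N)) (hc : c ^ 2 * r = -k ^ 2) :
    c • N * (c • N * c • N - k ^ 2 • (1 : A)) = 0 := by
  have hcube : c • N * (c • N * c • N) = (c * k ^ 2) • N := by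
    rw [smul_mul_smul_comm, smul_mul_smul_comm, hN, smul_neg, smul_smul, ← neg_smul]
    congr 1
    linear_combination (-c) * hc
  rw [mul_sub, hcube, mul_smul_one, smul_smul, mul_comm (k ^ 2) c, sub_self]

theorem star_I_mul_ofReal_div_ofReal (k s : ℝ) :
    star (Complex.I * k / s) = -(Complex.I * k / s) := by
  simp [neg_div]

theorem I_mul_ofReal_div_sqrt_sq_mul {x : ℝ} (hx : 0 < x) (k : ℂ) :
    (Complex.I * k / (√x : ℂ)) ^ 2 * x = -k ^ 2 := by
  have hsq : (√x : ℂ) ^ 2 = x := by exact_mod_cast Real.sq_sqrt hx.le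
  have hne : (√x : ℂ) ≠ 0 := by exact_mod_cast (Real.sqrt_pos.mpr hx).ne'
  rw [div_pow, mul_pow, Complex.I_sq, ← hsq]
  field_simp

namespace Matrix

variable {R : Type*} [CommRing R]

/-- `normalWedge a b = e₃ vᵀ - v e₃ᵀ` for the tangential vector `v = (a, b, 0)`. -/
def normalWedge (a b : R) : Matrix (Fin 3) (Fin 3) R :=
  !![0, 0, -a; 0, 0, -b; a, b, 0]

theorem normalWedge_mul_normalWedge_mul_normalWedge (a b : R) :
    normalWedge a b * (normalWedge a b * normalWedge a b) =
      -((a ^ 2 + b ^ 2) • normalWedge a b) := by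
  ext i j
  fin_cases i <;> fin_cases j <;>
    simp [normalWedge, mul_apply, Fin.sum_univ_three] <;> ring

theorem conjTranspose_normalWedge [StarRing R] (a b : R) :
    (normalWedge a b)ᴴ = -normalWedge (star a) (star b) := by
  ext i j
  fin_cases i <;> fin_cases j <;> simp [normalWedge]

end Matrix

theorem stmt8_general (k₀ : ℝ) (ξ₁ ξ₂ : ℝ) (hξ : ξ₁ ≠ 0 ∨ ξ₂ ≠ 0) :
    (sigmaB k₀ ξ₁ ξ₂)ᴴ = sigmaB k₀ ξ₁ ξ₂ ∧
      sigmaB k₀ ξ₁ ξ₂ *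
        (sigmaB k₀ ξ₁ ξ₂ * sigmaB k₀ ξ₁ ξ₂
          - ((k₀ : ℂ) ^ 2) • (1 : Matrix (Fin 3) (Fin 3) ℂ)) = 0 := by
  have hr : 0 < ξ₁ ^ 2 + ξ₂ ^ 2 := by
    rcases hξ with h | h <;> positivity
  have hσ : sigmaB k₀ ξ₁ ξ₂ =
      (Complex.I * k₀ / (√(ξ₁ ^ 2 + ξ₂ ^ 2) : ℂ)) • normalWedge (ξ₁ : ℂ) ξ₂ := rfl
  rw [hσ]
  constructor
  · rw [conjTranspose_smul, conjTranspose_normalWedge, star_I_mul_ofReal_div_ofReal,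
      neg_smul_neg]
    simp only [Complex.star_def, Complex.conj_ofReal]
  · refine smul_mul_smul_mul_sub_eq_zero (normalWedge_mul_normalWedge_mul_normalWedge _ _) ?_
    simpa using I_mul_ofReal_div_sqrt_sq_mul hr (k₀ : ℂ)

/-- With `k₀ = μ/(2(λ+2μ))`, the symbol `σ_B(ξ')` is Hermitian and satisfies
`σ_B(ξ')(σ_B(ξ')² - k₀² E) = 0`, the identity underlying the polynomial compactness of
the 3D elastic Neumann–Poincaré operator. -/
theorem stmt8 (μ lam : ℝ) (hμ : 0 < μ) (h2 : 0 < lam + 2 * μ)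
    (k₀ : ℝ) (hk₀ : k₀ = μ / (2 * (lam + 2 * μ)))
    (ξ₁ ξ₂ : ℝ) (hξ : ξ₁ ≠ 0 ∨ ξ₂ ≠ 0) :
    (sigmaB k₀ ξ₁ ξ₂)ᴴ = sigmaB k₀ ξ₁ ξ₂ ∧
      sigmaB k₀ ξ₁ ξ₂ *
        (sigmaB k₀ ξ₁ ξ₂ * sigmaB k₀ ξ₁ ξ₂
          - ((k₀ : ℂ) ^ 2) • (1 : Matrix (Fin 3) (Fin 3) ℂ)) = 0 :=
  stmt8_general k₀ ξ₁ ξ₂ hξ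
end

section
/- Let μ > 0 and λ be real with λ + 2μ > 0, and set k₀ = μ/(2(λ+2μ)). Define for integers j ≥ 1 the sequences λ_j⁰ = 3/(2(2j+1)), λ_j⁺ = (3λ − 2μ(2j² − 2j − 3))/(2(λ+2μ)(4j² − 1)), λ_j⁻ = (−3λ + 2μ(2j² + 2j − 3))/(2(λ+2μ)(4j² − 1)) (the eigenvalues of the elastic Neumann–Poincaré operator on the unit sphere). Then λ_j⁰ → 0, λ_j⁺ → −k₀ and λ_j⁻ → k₀ as j → ∞; moreover j·λ_j⁰ → 3/4, j·(λ_j⁺ + k₀) → k₀ and j·(λ_j⁻ − k₀) → k₀, so all three sequences converge to their limits (the three points 0, ±k₀ of the essential spectrum) at the rate O(1/j). -/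
/-!
After subtracting the limit, the `j²` terms of `λ_j^±` cancel, so each of `j·λ_j⁰`,
`j·(λ_j⁺ + k₀)`, `j·(λ_j⁻ - k₀)` is a ratio of polynomials in `j` of equal degree. Such a ratio
is a function of `1/j` continuous at `0`, so it tends to the quotient of the leading
coefficients. The convergence of the sequences themselves follows, since
`λ_j - L = (1/j)·(j·(λ_j - L)) → 0·c`.
-/

open Filter Topology

section RationalLimits

variable {𝕜 : Type*} [RCLike 𝕜]

theorem tendsto_comp_inv_natCast {f : 𝕜 → 𝕜} (hf : ContinuousAt f 0) :
    Tendsto (fun n : ℕ => f (n : 𝕜)⁻¹) atTop (𝓝 (f 0)) :=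
  hf.tendsto.comp tendsto_inv_atTop_nhds_zero_nat

theorem tendsto_linear_div_linear (a b p q : 𝕜) (hp : p ≠ 0) :
    Tendsto (fun n : ℕ => (a * n + b) / (p * n + q)) atTop (𝓝 (a / p)) := by
  have hf : ContinuousAt (fun x : 𝕜 => (a + b * x) / (p + q * x)) 0 := by
    fun_prop (disch := simpa using hp)
  have h := tendsto_comp_inv_natCast hf
  simp only [mul_zero, add_zero] at h
  refine h.congr' ?_
  filter_upwards [eventually_ne_atTop 0] with n hn
  have hn' : (n : 𝕜) ≠ 0 := Nat.cast_ne_zero.mpr hn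
  field_simp

theorem tendsto_quadratic_div_quadratic (a b c p q r : 𝕜) (hp : p ≠ 0) :
    Tendsto (fun n : ℕ => (a * n ^ 2 + b * n + c) / (p * n ^ 2 + q * n + r)) atTop
      (𝓝 (a / p)) := by
  have hf : ContinuousAt (fun x : 𝕜 => (a + b * x + c * x ^ 2) / (p + q * x + r * x ^ 2)) 0 := by
    fun_prop (disch := simpa using hp)
  have h := tendsto_comp_inv_natCast hf
  simp only [mul_zero, add_zero, ne_eq, OfNat.ofNat_ne_zero, not_false_eq_true, zero_pow] at h
  refine h.congr' ?_
  filter_upwards [eventually_ne_atTop 0] with n hn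
  have hn' : (n : 𝕜) ≠ 0 := Nat.cast_ne_zero.mpr hn
  field_simp

theorem tendsto_of_tendsto_natCast_mul_sub {x : ℕ → 𝕜} {L c : 𝕜}
    (h : Tendsto (fun n : ℕ => (n : 𝕜) * (x n - L)) atTop (𝓝 c)) :
    Tendsto x atTop (𝓝 L) := by
  have hsub : Tendsto (fun n : ℕ => x n - L) atTop (𝓝 0) := by
    have h' := (tendsto_inv_atTop_nhds_zero_nat (𝕜 := 𝕜)).mul h
    rw [zero_mul] at h'
    refine h'.congr' ?_
    filter_upwards [eventually_ne_atTop 0] with n hn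
    rw [inv_mul_cancel_left₀ (Nat.cast_ne_zero.mpr hn)]
  simpa using hsub.add_const L

end RationalLimits

theorem four_mul_natCast_sq_sub_one_ne_zero {R : Type*} [Ring R] [CharZero R] (n : ℕ) :
    4 * (n : R) ^ 2 - 1 ≠ 0 := by
  intro h
  have : 4 * n ^ 2 = 1 := by exact_mod_cast sub_eq_zero.mp h
  omega

namespace ElasticNeumannPoincare

variable (μ lam : ℝ)

-- The eigenvalues `λ_j⁰, λ_j⁺, λ_j⁻` (`j ≥ 1`) of the Neumann–Poincaré operator of the unit ball.
noncomputable def eigenvalueZero (j : ℕ) : ℝ := 3 / (2 * (2 * (j : ℝ) + 1))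

noncomputable def eigenvaluePlus (j : ℕ) : ℝ :=
  (3 * lam - 2 * μ * (2 * (j : ℝ) ^ 2 - 2 * (j : ℝ) - 3)) /
    (2 * (lam + 2 * μ) * (4 * (j : ℝ) ^ 2 - 1))

noncomputable def eigenvalueMinus (j : ℕ) : ℝ :=
  (-(3 * lam) + 2 * μ * (2 * (j : ℝ) ^ 2 + 2 * (j : ℝ) - 3)) /
    (2 * (lam + 2 * μ) * (4 * (j : ℝ) ^ 2 - 1))

theorem tendsto_natCast_mul_eigenvalueZero :
    Tendsto (fun j : ℕ => (j : ℝ) * eigenvalueZero j) atTop (𝓝 (3 / 4)) := by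
  refine (tendsto_linear_div_linear (3 : ℝ) 0 4 2 (by norm_num)).congr fun j => ?_
  rw [eigenvalueZero]
  field_simp
  ring

variable {μ lam}

theorem tendsto_natCast_mul_eigenvaluePlus_add (hD : lam + 2 * μ ≠ 0) :
    Tendsto (fun j : ℕ => (j : ℝ) * (eigenvaluePlus μ lam j + μ / (2 * (lam + 2 * μ))))
      atTop (𝓝 (μ / (2 * (lam + 2 * μ)))) := by
  -- `λ_j⁺ + k₀ = (4μj + 3λ + 5μ) / (2(λ + 2μ)(4j² - 1))`
  have h := tendsto_quadratic_div_quadratic (4 * μ) (3 * lam + 5 * μ) 0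
    (8 * (lam + 2 * μ)) 0 (-(2 * (lam + 2 * μ))) (mul_ne_zero (by norm_num) hD)
  rw [show 4 * μ / (8 * (lam + 2 * μ)) = μ / (2 * (lam + 2 * μ)) by field_simp; ring] at h
  refine h.congr fun j => ?_
  have := four_mul_natCast_sq_sub_one_ne_zero (R := ℝ) j
  rw [eigenvaluePlus, show 8 * (lam + 2 * μ) * (j : ℝ) ^ 2 + 0 * j + -(2 * (lam + 2 * μ)) =
    2 * (lam + 2 * μ) * (4 * (j : ℝ) ^ 2 - 1) by ring]
  field_simp
  ring

theorem tendsto_natCast_mul_eigenvalueMinus_sub (hD : lam + 2 * μ ≠ 0) :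
    Tendsto (fun j : ℕ => (j : ℝ) * (eigenvalueMinus μ lam j - μ / (2 * (lam + 2 * μ))))
      atTop (𝓝 (μ / (2 * (lam + 2 * μ)))) := by
  -- `λ_j⁻ - k₀ = (4μj - 3λ - 5μ) / (2(λ + 2μ)(4j² - 1))`
  have h := tendsto_quadratic_div_quadratic (4 * μ) (-(3 * lam + 5 * μ)) 0
    (8 * (lam + 2 * μ)) 0 (-(2 * (lam + 2 * μ))) (mul_ne_zero (by norm_num) hD)
  rw [show 4 * μ / (8 * (lam + 2 * μ)) = μ / (2 * (lam + 2 * μ)) by field_simp; ring] at h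
  refine h.congr fun j => ?_
  have := four_mul_natCast_sq_sub_one_ne_zero (R := ℝ) j
  rw [eigenvalueMinus, show 8 * (lam + 2 * μ) * (j : ℝ) ^ 2 + 0 * j + -(2 * (lam + 2 * μ)) =
    2 * (lam + 2 * μ) * (4 * (j : ℝ) ^ 2 - 1) by ring]
  field_simp
  ring

end ElasticNeumannPoincare

open ElasticNeumannPoincare

theorem stmt14_general (μ lam : ℝ) (h2 : 0 < lam + 2 * μ)
    (k₀ : ℝ) (hk₀ : k₀ = μ / (2 * (lam + 2 * μ)))
    (l0 lp lm : ℕ → ℝ)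
    (hl0 : ∀ j : ℕ, 1 ≤ j → l0 j = 3 / (2 * (2 * (j : ℝ) + 1)))
    (hlp : ∀ j : ℕ, 1 ≤ j →
      lp j = (3 * lam - 2 * μ * (2 * (j : ℝ) ^ 2 - 2 * (j : ℝ) - 3))
        / (2 * (lam + 2 * μ) * (4 * (j : ℝ) ^ 2 - 1)))
    (hlm : ∀ j : ℕ, 1 ≤ j →
      lm j = (-(3 * lam) + 2 * μ * (2 * (j : ℝ) ^ 2 + 2 * (j : ℝ) - 3))
        / (2 * (lam + 2 * μ) * (4 * (j : ℝ) ^ 2 - 1))) :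
    Tendsto l0 atTop (𝓝 0) ∧
    Tendsto lp atTop (𝓝 (-k₀)) ∧
    Tendsto lm atTop (𝓝 k₀) ∧
    Tendsto (fun j : ℕ => (j : ℝ) * l0 j) atTop (𝓝 (3 / 4)) ∧
    Tendsto (fun j : ℕ => (j : ℝ) * (lp j + k₀)) atTop (𝓝 k₀) ∧
    Tendsto (fun j : ℕ => (j : ℝ) * (lm j - k₀)) atTop (𝓝 k₀) := by
  subst hk₀
  have e0 : eigenvalueZero =ᶠ[atTop] l0 := eventually_atTop.2 ⟨1, fun j hj => (hl0 j hj).symm⟩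
  have ep : eigenvaluePlus μ lam =ᶠ[atTop] lp :=
    eventually_atTop.2 ⟨1, fun j hj => (hlp j hj).symm⟩
  have em : eigenvalueMinus μ lam =ᶠ[atTop] lm :=
    eventually_atTop.2 ⟨1, fun j hj => (hlm j hj).symm⟩
  have rate0 : Tendsto (fun j : ℕ => (j : ℝ) * l0 j) atTop (𝓝 (3 / 4)) :=
    tendsto_natCast_mul_eigenvalueZero.congr' (e0.mono fun j h => by rw [h])
  have ratep : Tendsto (fun j : ℕ => (j : ℝ) * (lp j + μ / (2 * (lam + 2 * μ)))) atTop
      (𝓝 (μ / (2 * (lam + 2 * μ)))) :=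
    (tendsto_natCast_mul_eigenvaluePlus_add h2.ne').congr' (ep.mono fun j h => by rw [h])
  have ratem : Tendsto (fun j : ℕ => (j : ℝ) * (lm j - μ / (2 * (lam + 2 * μ)))) atTop
      (𝓝 (μ / (2 * (lam + 2 * μ)))) :=
    (tendsto_natCast_mul_eigenvalueMinus_sub h2.ne').congr' (em.mono fun j h => by rw [h])
  refine ⟨?_, ?_, ?_, rate0, ratep, ratem⟩
  · exact tendsto_of_tendsto_natCast_mul_sub (c := 3 / 4) (by simpa using rate0)
  · exact tendsto_of_tendsto_natCast_mul_sub (c := μ / (2 * (lam + 2 * μ))) (by simpa using ratep)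
  · exact tendsto_of_tendsto_natCast_mul_sub ratem

/-- The three sequences of eigenvalues of the elastic Neumann–Poincaré operator on the
unit sphere converge to the three points `0, -k₀, k₀` of the essential spectrum at the
rate `O(1/j)`: `j·λ_j⁰ → 3/4`, `j·(λ_j⁺ + k₀) → k₀`, `j·(λ_j⁻ - k₀) → k₀`. -/
theorem stmt14 (μ lam : ℝ) (hμ : 0 < μ) (h2 : 0 < lam + 2 * μ)
    (k₀ : ℝ) (hk₀ : k₀ = μ / (2 * (lam + 2 * μ)))
    (l0 lp lm : ℕ → ℝ)
    (hl0 : ∀ j : ℕ, 1 ≤ j → l0 j = 3 / (2 * (2 * (j : ℝ) + 1)))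
    (hlp : ∀ j : ℕ, 1 ≤ j →
      lp j = (3 * lam - 2 * μ * (2 * (j : ℝ) ^ 2 - 2 * (j : ℝ) - 3))
        / (2 * (lam + 2 * μ) * (4 * (j : ℝ) ^ 2 - 1)))
    (hlm : ∀ j : ℕ, 1 ≤ j →
      lm j = (-(3 * lam) + 2 * μ * (2 * (j : ℝ) ^ 2 + 2 * (j : ℝ) - 3))
        / (2 * (lam + 2 * μ) * (4 * (j : ℝ) ^ 2 - 1))) :
    Tendsto l0 atTop (𝓝 0) ∧
    Tendsto lp atTop (𝓝 (-k₀)) ∧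
    Tendsto lm atTop (𝓝 k₀) ∧
    Tendsto (fun j : ℕ => (j : ℝ) * l0 j) atTop (𝓝 (3 / 4)) ∧
    Tendsto (fun j : ℕ => (j : ℝ) * (lp j + k₀)) atTop (𝓝 k₀) ∧
    Tendsto (fun j : ℕ => (j : ℝ) * (lm j - k₀)) atTop (𝓝 k₀) :=
  stmt14_general μ lam h2 k₀ hk₀ l0 lp lm hl0 hlp hlm
end
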